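/- Let S ⊆ λ and let 𝔠 be an S-closed C-extending sequence. For α, β ∈ C with α < β and w ⊆ α such that w ∪ {min(C \ sup(w))} is S-closed: if u ∈ pos_S(w, 𝔠, α) and v ∈ pos_S(u, 𝔠, β), then v ∈ pos_S(w, 𝔠, β). -/

import Mathlib

open Set

noncomputable section

universe u

/-- `c` is an `(α,β)`-extending function: it maps subsets of `α` (coded as subsets of
`Set.Iio α`) to subsets of `β` that are not subsets of `α`, with `c u ∩ α = u`. -/
def ExtFun (α β : Ordinal.{u}) (c : Set Ordinal.{u} → Set Ordinal.{u}) : Prop :=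
  ∀ u, u ⊆ Set.Iio α → c u ⊆ Set.Iio β ∧ ¬ c u ⊆ Set.Iio α ∧ c u ∩ Set.Iio α = u

/-- The next element of `C` above `α`. -/
def nextC (C : Set Ordinal.{u}) (α : Ordinal.{u}) : Ordinal.{u} := sInf (C ∩ Set.Ioi α)

/-- The least element of `C` above all elements of `w`. -/
def firstAbove (C : Set Ordinal.{u}) (w : Set Ordinal.{u}) : Ordinal.{u} :=
  sInf {α ∈ C | w ⊆ Set.Iio α}

/-- The least element of `C` which is `≥ sup w`. -/
def minAboveSup (C : Set Ordinal.{u}) (w : Set Ordinal.{u}) : Ordinal.{u} :=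
  sInf (C \ Set.Iio (sSup w))

/-- `C` is an unbounded subset of (the ordinals below) `lam`. -/
def UnbIn (lam : Ordinal.{u}) (C : Set Ordinal.{u}) : Prop :=
  C ⊆ Set.Iio lam ∧ ∀ α < lam, ∃ β ∈ C, α < β

/-- `C` is a club (closed and unbounded) subset of `lam`. -/
def IsClubIn (lam : Ordinal.{u}) (C : Set Ordinal.{u}) : Prop :=
  UnbIn lam C ∧
    ∀ ξ < lam, (C ∩ Set.Iio ξ).Nonempty → ξ = sSup (C ∩ Set.Iio ξ) → ξ ∈ C

/-- `S` is a stationary subset of `lam`. -/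
def StatIn (lam : Ordinal.{u}) (S : Set Ordinal.{u}) : Prop :=
  S ⊆ Set.Iio lam ∧ ∀ C, IsClubIn lam C → (S ∩ C).Nonempty

/-- `𝔠 = ⟨c α : α ∈ C⟩` is a `C`-extending sequence. -/
def CextSeq (lam : Ordinal.{u}) (C : Set Ordinal.{u})
    (c : Ordinal.{u} → Set Ordinal.{u} → Set Ordinal.{u}) : Prop :=
  UnbIn lam C ∧ ∀ α ∈ C, ExtFun α (nextC C α) (c α)

/-- `pos⁺(w, 𝔠, β)`. -/
def posPlus (C : Set Ordinal.{u}) (c : Ordinal.{u} → Set Ordinal.{u} → Set Ordinal.{u})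
    (w : Set Ordinal.{u}) (β : Ordinal.{u}) : Set (Set Ordinal.{u}) :=
  {u | u ⊆ Set.Iio β ∧
    u ∩ Set.Iio (firstAbove C w) = w ∧
    (∀ α₀ ∈ C, w ⊆ Set.Iio α₀ → (C ∩ Set.Ioi α₀).Nonempty → nextC C α₀ ≤ β →
      (c α₀ (u ∩ Set.Iio α₀) = u ∩ Set.Iio (nextC C α₀) ∨
        u ∩ Set.Iio α₀ = u ∩ Set.Iio (nextC C α₀))) ∧
    (∀ α₀, sSup w < α₀ → α₀ ∉ C → (C ∩ Set.Iio α₀).Nonempty →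
      α₀ = sSup (C ∩ Set.Iio α₀) → (C ∩ Set.Ioi α₀).Nonempty → nextC C α₀ ≤ β →
      u ∩ Set.Iio (nextC C α₀) = u ∩ Set.Iio α₀)}

/-- `pos(w, 𝔠, β)`. -/
def pos (C : Set Ordinal.{u}) (c : Ordinal.{u} → Set Ordinal.{u} → Set Ordinal.{u})
    (w : Set Ordinal.{u}) (β : Ordinal.{u}) : Set (Set Ordinal.{u}) :=
  {u ∈ posPlus C c w β |
    firstAbove C w ≤ β → nextC C (firstAbove C w) ≤ β →
      u ∩ Set.Iio (nextC C (firstAbove C w)) = c (firstAbove C w) w}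

/-- `w` is an `S`-closed set: limits of `w` lying in `S` belong to `w`. -/
def SClosed (S w : Set Ordinal.{u}) : Prop :=
  ∀ ξ, (w ∩ Set.Iio ξ).Nonempty → ξ = sSup (w ∩ Set.Iio ξ) → ξ ∈ S → ξ ∈ w

/-- `𝔠` is an `S`-closed `C`-extending sequence. -/
def SClosedSeq (lam : Ordinal.{u}) (S C : Set Ordinal.{u})
    (c : Ordinal.{u} → Set Ordinal.{u} → Set Ordinal.{u}) : Prop :=
  IsClubIn lam C ∧ CextSeq lam C c ∧
  (∀ α ∈ C, ∀ u, u ⊆ Set.Iio α → α ∈ c α u) ∧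
  (∀ ξ ∈ S, ξ ∉ C → ∀ α ∈ C ∩ Set.Iio ξ, ∀ u, u ⊆ Set.Iio α →
    ξ = sSup (c α u ∩ Set.Iio ξ) → ξ ∈ c α u)

/-- `pos⁺_S(w, 𝔠, β)`. -/
def posPlusS (S C : Set Ordinal.{u}) (c : Ordinal.{u} → Set Ordinal.{u} → Set Ordinal.{u})
    (w : Set Ordinal.{u}) (β : Ordinal.{u}) : Set (Set Ordinal.{u}) :=
  {u ∈ posPlus C c w β | SClosed S (u ∪ {β})}

/-- `pos_S(w, 𝔠, β)`. -/
def posS (S C : Set Ordinal.{u}) (c : Ordinal.{u} → Set Ordinal.{u} → Set Ordinal.{u})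
    (w : Set Ordinal.{u}) (β : Ordinal.{u}) : Set (Set Ordinal.{u}) :=
  {u ∈ pos C c w β | SClosed S (u ∪ {β})}

/-- A condition in the forcing notion `Q¹_S`: a triple `(w, C, 𝔠)` where `C` is a club of
`lam`, `w ⊆ min C` with `w ∪ {min C}` `S`-closed, and `𝔠` is an `S`-closed `C`-extending
sequence (normalized to be `∅` outside its natural domain). -/
structure Q1S (lam : Ordinal.{u}) (S : Set Ordinal.{u}) where
  w : Set Ordinal.{u}
  C : Set Ordinal.{u}
  c : Ordinal.{u} → Set Ordinal.{u} → Set Ordinal.{u}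
  seq : SClosedSeq lam S C c
  w_sub : w ⊆ Set.Iio (sInf C)
  w_cl : SClosed S (w ∪ {sInf C})
  norm : ∀ α u, (α ∉ C ∨ ¬ u ⊆ Set.Iio α) → c α u = ∅

/-- The order of `Q¹_S`. -/
def Q1Sle (lam : Ordinal.{u}) (S : Set Ordinal.{u}) (p q : Q1S lam S) : Prop :=
  q.C ⊆ p.C ∧ q.w ∈ posPlusS S p.C p.c p.w (sInf q.C) ∧
  ∀ α₀ ∈ q.C, (q.C ∩ Set.Ioi α₀).Nonempty →
    ∀ u ∈ posPlusS S q.C q.c q.w α₀,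
      q.c α₀ u ∈ posS S p.C p.c u (nextC q.C α₀)

open scoped Classical in
/-- Restriction of an extending sequence to a smaller domain `C` (normalized). -/
def restC (C : Set Ordinal.{u}) (c : Ordinal.{u} → Set Ordinal.{u} → Set Ordinal.{u}) :
    Ordinal.{u} → Set Ordinal.{u} → Set Ordinal.{u} :=
  fun α u => if α ∈ C ∧ u ⊆ Set.Iio α then c α u else ∅

/-- `q` is the condition `p↾_α u = (u, C^p \ α, 𝔠^p ↾ (C^p \ α))`. -/
def IsRestrictedCond (lam : Ordinal.{u}) (S : Set Ordinal.{u}) (p : Q1S lam S)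
    (α : Ordinal.{u}) (u : Set Ordinal.{u}) (q : Q1S lam S) : Prop :=
  q.w = u ∧ q.C = p.C ∩ Set.Ici α ∧ q.c = restC (p.C ∩ Set.Ici α) p.c

/-- The order type of a set of ordinals. -/
def otp (s : Set Ordinal.{u}) : Ordinal.{u + 1} := Ordinal.type (Subrel ((· < ·) : Ordinal.{u} → Ordinal.{u} → Prop) (· ∈ s))

open scoped Classical in
/-- The extending sequence of the natural limit of an increasing sequence
`⟨p ξ : ξ < γ⟩` of conditions in `Q¹_S`. -/
def natLimitC (lam : Ordinal.{u}) (S : Set Ordinal.{u}) (γ : Ordinal.{u})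
    (p : Ordinal.{u} → Q1S lam S) : Ordinal.{u} → Set Ordinal.{u} → Set Ordinal.{u} :=
  fun δ u =>
    if δ ∈ ⋂ ξ ∈ Set.Iio γ, (p ξ).C then
      if u ⊆ Set.Iio δ then
        if ∀ ξ < γ, u ∈ posPlusS S (p ξ).C (p ξ).c (p ξ).w δ then
          ⋃ ξ ∈ Set.Iio γ, (p ξ).c δ u
        else u ∪ {δ}
      else ∅
    else ∅

/-- `G` is a filter on the forcing notion `Q¹_S`. -/
def QFilter (lam : Ordinal.{u}) (S : Set Ordinal.{u}) (G : Set (Q1S lam S)) : Prop :=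
  G.Nonempty ∧ (∀ p ∈ G, ∀ q, Q1Sle lam S q p → q ∈ G) ∧
    ∀ p ∈ G, ∀ q ∈ G, ∃ r ∈ G, Q1Sle lam S p r ∧ Q1Sle lam S q r

/-- `G` is a generic filter on `Q¹_S`: a filter meeting every dense set. -/
def QGeneric (lam : Ordinal.{u}) (S : Set Ordinal.{u}) (G : Set (Q1S lam S)) : Prop :=
  QFilter lam S G ∧ ∀ D : Set (Q1S lam S),
    (∀ p, ∃ q ∈ D, Q1Sle lam S p q) → (D ∩ G).Nonempty

section Game
variable {Q : Type*}

/-- `f` codes a legal partial play of `⅁₀^λ(Q, r)` of length `i` in which Complete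
follows the strategy `σ`. -/
def IsPartialPlay (le : Q → Q → Prop) (r : Q)
    (σ : (Ordinal.{u} → Q × Q) → Ordinal.{u} → Q → Q) (i : Ordinal.{u})
    (f : Ordinal.{u} → Q × Q) : Prop :=
  ∀ j < i, le r (f j).1 ∧ (∀ k < j, le (f k).2 (f j).1) ∧
    le (f j).1 (f j).2 ∧ (f j).2 = σ f j (f j).1

/-- `σ` is a winning strategy for Complete in `⅁₀^λ(Q, r)`: it depends only on the
history, Incomplete always has a legal move, and `σ` answers any legal move legally. -/
def WinningStrat (le : Q → Q → Prop) (lam : Ordinal.{u}) (r : Q)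
    (σ : (Ordinal.{u} → Q × Q) → Ordinal.{u} → Q → Q) : Prop :=
  (∀ f g i p, (∀ j < i, f j = g j) → σ f i p = σ g i p) ∧
  ∀ i < lam, ∀ f, IsPartialPlay le r σ i f →
    (∃ p, le r p ∧ ∀ j < i, le (f j).2 p) ∧
    (∀ p, le r p → (∀ j < i, le (f j).2 p) → le p (σ f i p))

/-- `Q` is strategically `(<λ)`-complete. -/
def StratComplete (Q : Type*) (le : Q → Q → Prop) (lam : Ordinal.{u}) : Prop :=
  ∀ r : Q, ∃ σ, WinningStrat le lam r σ

end Game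

/-- A family `Fam ⊆ β^β` is `F`-dominating. -/
def Dominating {β : Type*} [LT β] (F : Set (Set β)) (Fam : Set (β → β)) : Prop :=
  ∀ g : β → β, ∃ f ∈ Fam, {a | g a < f a} ∈ F

/-- The `F`-dominating number `𝔡_F`. -/
def domNum {β : Type*} [LT β] (F : Set (Set β)) : Cardinal :=
  sInf {c | ∃ Fam : Set (β → β), Dominating F Fam ∧ c = Cardinal.mk Fam}

/-- `U` is a (proper) filter on (the ordinals below) `lam`. -/
def FilterOn (lam : Ordinal.{u}) (U : Set (Set Ordinal.{u})) : Prop :=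
  (∀ A ∈ U, A ⊆ Set.Iio lam) ∧ Set.Iio lam ∈ U ∧ ∅ ∉ U ∧
  (∀ A ∈ U, ∀ B ∈ U, A ∩ B ∈ U) ∧
  (∀ A ∈ U, ∀ B, A ⊆ B → B ⊆ Set.Iio lam → B ∈ U)

/-- The diagonal intersection of a `lam`-sequence of sets. -/
def diagInter (lam : Ordinal.{u}) (A : Ordinal.{u} → Set Ordinal.{u}) : Set Ordinal.{u} :=
  {δ | δ < lam ∧ ∀ i < δ, δ ∈ A i}

/-- `U` is a normal filter on `lam`. -/
def NormalFilterOn (lam : Ordinal.{u}) (U : Set (Set Ordinal.{u})) : Prop :=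
  FilterOn lam U ∧
    ∀ A : Ordinal.{u} → Set Ordinal.{u}, (∀ i < lam, A i ∈ U) → diagInter lam A ∈ U

/-- A condition in the forcing notion `Q²_𝒰`. -/
structure Q2U (lam : Ordinal.{u}) (U : Set (Set Ordinal.{u})) where
  w : Set Ordinal.{u}
  C : Set Ordinal.{u}
  c : Ordinal.{u} → Set Ordinal.{u} → Set Ordinal.{u}
  C_mem : C ∈ U
  seq : CextSeq lam C c
  w_sub : w ⊆ Set.Iio (sInf C)
  norm : ∀ α u, (α ∉ C ∨ ¬ u ⊆ Set.Iio α) → c α u = ∅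

/-- The order of `Q²_𝒰`. -/
def Q2Ule (lam : Ordinal.{u}) (U : Set (Set Ordinal.{u})) (p q : Q2U lam U) : Prop :=
  q.C ⊆ p.C ∧ q.w ∈ posPlus p.C p.c p.w (sInf q.C) ∧
  ∀ α₀ ∈ q.C, (q.C ∩ Set.Ioi α₀).Nonempty →
    ∀ u ∈ posPlus q.C q.c q.w α₀,
      q.c α₀ u ∈ pos p.C p.c u (nextC q.C α₀)

/-- `q` is the condition `p↾_α u` in `Q²_𝒰`. -/
def IsRestrictedCond2 (lam : Ordinal.{u}) (U : Set (Set Ordinal.{u})) (p : Q2U lam U)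
    (α : Ordinal.{u}) (u : Set Ordinal.{u}) (q : Q2U lam U) : Prop :=
  q.w = u ∧ q.C = p.C ∩ Set.Ici α ∧ q.c = restC (p.C ∩ Set.Ici α) p.c

end

section PosTrans

variable {C : Set Ordinal} {c : Ordinal → Set Ordinal → Set Ordinal} {w u v : Set Ordinal}
  {α β γ : Ordinal}

theorem firstAbove_spec (hα : α ∈ C) (hu : u ⊆ Iio α) :
    firstAbove C u ∈ C ∧ u ⊆ Iio (firstAbove C u) :=
  csInf_mem (s := {γ ∈ C | u ⊆ Iio γ}) ⟨α, hα, hu⟩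

theorem firstAbove_le (hα : α ∈ C) (hu : u ⊆ Iio α) : firstAbove C u ≤ α :=
  csInf_le' ⟨hα, hu⟩

theorem firstAbove_mono (hα : α ∈ C) (hu : u ⊆ Iio α) (hwu : w ⊆ u) :
    firstAbove C w ≤ firstAbove C u :=
  le_csInf ⟨α, hα, hu⟩ fun _ hγ => csInf_le' ⟨hγ.1, hwu.trans hγ.2⟩

theorem nextC_le (hγ : γ ∈ C) (hαγ : α < γ) : nextC C α ≤ γ :=
  csInf_le' ⟨hγ, hαγ⟩

theorem sSup_lt_of_firstAbove_lt (hα : α ∈ C) (hu : u ⊆ Iio α) (h : firstAbove C u < γ) :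
    sSup u < γ :=
  (csSup_le' fun _ hx => ((firstAbove_spec hα hu).2 hx).le).trans_lt h

theorem subset_of_mem_posPlus (hu : u ∈ posPlus C c w β) : w ⊆ u :=
  hu.2.1 ▸ inter_subset_left

theorem inter_Iio_eq_of_mem_posPlus (hv : v ∈ posPlus C c u β) (hγ : γ ≤ firstAbove C u) :
    v ∩ Iio γ = u ∩ Iio γ := by
  rw [← hv.2.1, inter_assoc, Iio_inter_Iio, min_eq_right hγ]

/-- Below `firstAbove C u` the set `v` coincides with `u`, so each requirement on `v` at an
index `α₀` is inherited from `u` when `nextC C α₀ ≤ firstAbove C u`, and from `v` itself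
(relative to `u`) otherwise. -/
theorem posPlus_trans (hα : α ∈ C) (hu : u ∈ posPlus C c w α) (hv : v ∈ posPlus C c u β) :
    v ∈ posPlus C c w β := by
  have hagree : ∀ γ ≤ firstAbove C u, v ∩ Iio γ = u ∩ Iio γ :=
    fun _ => inter_Iio_eq_of_mem_posPlus hv
  have hwu := subset_of_mem_posPlus hu
  obtain ⟨huα, huw, hu_ext, hu_lim⟩ := hu
  obtain ⟨hvβ, -, hv_ext, hv_lim⟩ := hv
  have hαu := firstAbove_spec hα huα
  have hαu_le : firstAbove C u ≤ α := firstAbove_le hα huα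
  refine ⟨hvβ, ?_, ?_, ?_⟩
  · rw [hagree _ (firstAbove_mono hα huα hwu), huw]
  · intro α₀ hα₀ hwα₀ hne hnext
    rcases lt_or_ge α₀ (firstAbove C u) with hlt | hge
    · have hnext_le := nextC_le hαu.1 hlt
      rw [hagree _ hlt.le, hagree _ hnext_le]
      exact hu_ext α₀ hα₀ hwα₀ hne (hnext_le.trans hαu_le)
    · exact hv_ext α₀ hα₀ (hαu.2.trans (Iio_subset_Iio hge)) hne hnext
  · intro α₀ hsup hα₀ hbelow hlim habove hnext
    rcases lt_or_ge α₀ (firstAbove C u) with hlt | hge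
    · have hnext_le := nextC_le hαu.1 hlt
      rw [hagree _ hlt.le, hagree _ hnext_le]
      exact hu_lim α₀ hsup hα₀ hbelow hlim habove (hnext_le.trans hαu_le)
    · have hgt : firstAbove C u < α₀ := hge.lt_of_ne fun h => hα₀ (h ▸ hαu.1)
      exact hv_lim α₀ (sSup_lt_of_firstAbove_lt hα huα hgt) hα₀ hbelow hlim habove hnext

theorem pos_trans (hα : α ∈ C) (hu : u ∈ pos C c w α) (hv : v ∈ pos C c u β) :
    v ∈ pos C c w β := by
  obtain ⟨hu, hu_root⟩ := hu
  obtain ⟨hv, hv_root⟩ := hv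
  refine ⟨posPlus_trans hα hu hv, fun hle hnext => ?_⟩
  have hαu := firstAbove_spec hα hu.1
  have hαu_le : firstAbove C u ≤ α := firstAbove_le hα hu.1
  have hmono : firstAbove C w ≤ firstAbove C u :=
    firstAbove_mono hα hu.1 (subset_of_mem_posPlus hu)
  rcases hmono.lt_or_eq with hlt | heq
  · have hnext_le := nextC_le hαu.1 hlt
    rw [inter_Iio_eq_of_mem_posPlus hv hnext_le]
    exact hu_root (hmono.trans hαu_le) (hnext_le.trans hαu_le)
  · have huw : u = w := by
      rw [← hu.2.1, heq, inter_eq_self_of_subset_left hαu.2]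
    subst huw
    exact hv_root hle hnext

end PosTrans

theorem posS_trans_general (S : Set Ordinal)
    (C : Set Ordinal) (c : Ordinal → Set Ordinal → Set Ordinal)
    (α β : Ordinal) (hα : α ∈ C)
    (w : Set Ordinal)
    (u v : Set Ordinal) (hu : u ∈ posS S C c w α) (hv : v ∈ posS S C c u β) :
    v ∈ posS S C c w β :=
  ⟨pos_trans hα hu.1 hv.1, hv.2⟩

/-- transitivity of `pos_S` for `S`-closed extending sequences. -/
theorem posS_trans (κ : Cardinal.{0}) (hκ : κ.IsInaccessible) (S : Set Ordinal)
    (C : Set Ordinal) (c : Ordinal → Set Ordinal → Set Ordinal)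
    (hc : SClosedSeq κ.ord S C c)
    (α β : Ordinal) (hα : α ∈ C) (hβ : β ∈ C) (hαβ : α < β)
    (w : Set Ordinal) (hw : w ⊆ Set.Iio α)
    (hwcl : SClosed S (w ∪ {minAboveSup C w}))
    (u v : Set Ordinal) (hu : u ∈ posS S C c w α) (hv : v ∈ posS S C c u β) :
    v ∈ posS S C c w β :=
  posS_trans_general S C c α β hα w u v hu hv
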